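/- Let p, q ∈ L¹([0, π]; ℝ) be real-valued, let λ, t ∈ ℝ, and let h = (h₁, h₂) : [0, π] → ℝ² be absolutely continuous with B h′ + Ω h = λ h almost everywhere and ∫₀^π (h₁² + h₂²) dx = 1. Define θ(x) = 1 + (e^t − 1) ∫₀ˣ (h₁(s)² + h₂(s)²) ds, Ω_t(x) = Ω(x) + ((e^t − 1)/θ(x)) · (B h(x) h(x)^T − h(x) h(x)^T B), and h̃(x) = (e^{t/2}/θ(x)) h(x). Then: (a) θ(x) ≥ min(1, e^t) > 0 for all x ∈ [0, π]; (b) Ω_t(x) − Ω(x) = σ₂·Δp(x) + σ₃·Δq(x) with Δp = ((e^t − 1)/θ)·2 h₁ h₂ and Δq = ((e^t − 1)/θ)·(h₂² − h₁²), so Ω_t is again a canonical potential matrix; (c) h̃ is absolutely continuous and B h̃′ + Ω_t h̃ = λ h̃ almost everywhere; (d) ∫₀^π (h̃₁² + h̃₂²) dx = 1; (e) ∫₀^π ‖Ω_t(x) − Ω(x)‖ dx = |t|. -/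

import Mathlib

open MeasureTheory Filter Set

noncomputable section

/-- The matrix `B` with rows `(0, 1)` and `(-1, 0)`. -/
def BmatR : Matrix (Fin 2) (Fin 2) ℝ := !![0, 1; -1, 0]

/-- The Pauli-type matrix `σ₂` with rows `(1, 0)` and `(0, -1)`. -/
def sigma2R : Matrix (Fin 2) (Fin 2) ℝ := !![1, 0; 0, -1]

/-- The Pauli-type matrix `σ₃` with rows `(0, 1)` and `(1, 0)`. -/
def sigma3R : Matrix (Fin 2) (Fin 2) ℝ := !![0, 1; 1, 0]

/-- The potential matrix `Ω(x) = σ₂·p(x) + σ₃·q(x)`. -/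
def OmegaR (p q : ℝ → ℝ) (x : ℝ) : Matrix (Fin 2) (Fin 2) ℝ := !![p x, q x; q x, -p x]

/-- The operator norm of a `2 × 2` real matrix, i.e. the square root of the largest
eigenvalue of `A* A`; for `a•σ₂ + b•σ₃` it equals `√(a² + b²)`. -/
def matNormR (M : Matrix (Fin 2) (Fin 2) ℝ) : ℝ := ‖Matrix.toEuclideanCLM (𝕜 := ℝ) M‖

/-- `θ(x) = 1 + (eᵗ - 1) ∫₀ˣ |h|²`. -/
def theta (t : ℝ) (h : ℝ → Fin 2 → ℝ) (x : ℝ) : ℝ :=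
  1 + (Real.exp t - 1) * ∫ s in (0:ℝ)..x, ((h s 0) ^ 2 + (h s 1) ^ 2)

/-- The perturbed potential
`Ω_t(x) = Ω(x) + ((eᵗ-1)/θ(x))·(B h hᵀ - h hᵀ B)`. -/
def OmegaPert (p q : ℝ → ℝ) (t : ℝ) (h : ℝ → Fin 2 → ℝ) (x : ℝ) :
    Matrix (Fin 2) (Fin 2) ℝ :=
  OmegaR p q x + ((Real.exp t - 1) / theta t h x) •
    (BmatR * Matrix.vecMulVec (h x) (h x) - Matrix.vecMulVec (h x) (h x) * BmatR)

/-- `h̃(x) = (e^{t/2}/θ(x))·h(x)`. -/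
def htilde (t : ℝ) (h : ℝ → Fin 2 → ℝ) (x : ℝ) : Fin 2 → ℝ :=
  (Real.exp (t / 2) / theta t h x) • h x

/-!
With `r = h₁² + h₂²` and `φ(x) = ∫₀ˣ r`, we have `θ = 1 + (eᵗ - 1) φ` with `0 ≤ φ ≤ 1`, so `θ` is
a convex combination of `1` and `eᵗ`, and `θ' = (eᵗ - 1) r`.

Since `B` is skew, `hᵀ B h = 0`, so `Ω_t - Ω` maps `h` to `(eᵗ - 1) r/θ · B h`; this is cancelled
exactly by the term `B (e^{t/2}/θ)' h` in the derivative of `h̃ = (e^{t/2}/θ) h`, a product of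
absolutely continuous functions.

The integrals have explicit primitives: `eᵗ r/θ² = eᵗ (φ/θ)'` and
`‖Ω_t - Ω‖ = |eᵗ - 1| r/θ` with `(eᵗ - 1) r/θ = (log θ)'`, while `θ(0) = 1` and `θ(π) = eᵗ`.
-/

open scoped Matrix

theorem MeasureTheory.IntegrableOn.intervalIntegrable_of_mem_Icc {E : Type*}
    [NormedAddCommGroup E] {f : ℝ → E} {a b x : ℝ} (hf : IntegrableOn f (Icc a b))
    (hx : x ∈ Icc a b) : IntervalIntegrable f volume a x :=
  (hf.mono_set (uIcc_of_le hx.1 ▸ Icc_subset_Icc le_rfl hx.2)).intervalIntegrable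

theorem intervalIntegral.eval_integral {ι : Type*} [Fintype ι] {f : ℝ → ι → ℝ} {a b : ℝ}
    (hf : IntervalIntegrable f volume a b) (i : ι) :
    (∫ x in a..b, f x) i = ∫ x in a..b, f x i :=
  ((ContinuousLinearMap.proj (R := ℝ) (φ := fun _ => ℝ) i).intervalIntegral_comp_comm hf).symm

theorem ContinuousOn.hasDerivAt_integral {E : Type*} [NormedAddCommGroup E] [NormedSpace ℝ E]
    [CompleteSpace E] {f : ℝ → E} {a b x : ℝ} (hf : ContinuousOn f (Icc a b))
    (hx : x ∈ Ioo a b) : HasDerivAt (fun y => ∫ s in a..y, f s) (f x) x :=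
  intervalIntegral.integral_hasDerivAt_right
    ((hf.mono (Icc_subset_Icc le_rfl hx.2.le)).intervalIntegrable_of_Icc hx.1.le)
    ((hf.mono Ioo_subset_Icc_self).stronglyMeasurableAtFilter isOpen_Ioo x hx)
    (hf.continuousAt (Icc_mem_nhds hx.1 hx.2))

theorem IntervalIntegrable.absolutelyContinuousOnInterval_const_add_integral {f : ℝ → ℝ}
    {a b : ℝ} (hf : IntervalIntegrable f volume a b) (F₀ : ℝ) :
    AbsolutelyContinuousOnInterval (fun x => F₀ + ∫ y in a..x, f y) a b := by
  simpa [AbsolutelyContinuousOnInterval, dist_add_left] using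
    hf.absolutelyContinuousOnInterval_intervalIntegral left_mem_uIcc

/-- Absolute continuity of `f` on `[a, b]` with a.e. derivative `f'`, in integrated form. -/
def IsPrimitiveOn {E : Type*} [NormedAddCommGroup E] [NormedSpace ℝ E] (f f' : ℝ → E)
    (a b : ℝ) : Prop :=
  IntegrableOn f' (Icc a b) ∧ ∀ x ∈ Icc a b, f x = f a + ∫ s in a..x, f' s

namespace IsPrimitiveOn

variable {E : Type*} [NormedAddCommGroup E] [NormedSpace ℝ E] {a b : ℝ}

theorem continuousOn {f f' : ℝ → E} (hf : IsPrimitiveOn f f' a b) :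
    ContinuousOn f (Icc a b) := by
  rcases le_or_gt a b with hab | hba
  · have hprim := (intervalIntegral.continuousOn_primitive_interval
      (uIcc_of_le hab ▸ hf.1)).const_add (f a)
    rw [uIcc_of_le hab] at hprim
    exact hprim.congr hf.2
  · simp [Icc_eq_empty_of_lt hba]

theorem of_hasDerivAt [CompleteSpace E] {f f' : ℝ → E} (hcont : ContinuousOn f (Icc a b))
    (hderiv : ∀ x ∈ Ioo a b, HasDerivAt f (f' x) x) (hint : IntegrableOn f' (Icc a b)) :
    IsPrimitiveOn f f' a b := by
  refine ⟨hint, fun x hx => ?_⟩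
  rw [intervalIntegral.integral_eq_sub_of_hasDerivAt_of_le hx.1
    (hcont.mono (Icc_subset_Icc le_rfl hx.2))
    (fun y hy => hderiv y (Ioo_subset_Ioo le_rfl hx.2 hy))
    (hint.intervalIntegrable_of_mem_Icc hx), add_sub_cancel]

theorem pi_iff {ι : Type*} [Fintype ι] {f f' : ℝ → ι → ℝ} :
    IsPrimitiveOn f f' a b ↔ ∀ i, IsPrimitiveOn (f · i) (f' · i) a b := by
  refine ⟨fun hf i => ⟨hf.1.eval i, fun x hx => ?_⟩, fun hf => ?_⟩
  · beta_reduce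
    rw [hf.2 x hx, Pi.add_apply,
      intervalIntegral.eval_integral (hf.1.intervalIntegrable_of_mem_Icc hx)]
  · have hint : IntegrableOn f' (Icc a b) :=
      Integrable.of_eval (μ := volume.restrict _) fun i => (hf i).1
    refine ⟨hint, fun x hx => funext fun i => ?_⟩
    rw [show f x i = _ from (hf i).2 x hx, Pi.add_apply,
      intervalIntegral.eval_integral (hint.intervalIntegrable_of_mem_Icc hx)]

theorem mul {c c' f f' : ℝ → ℝ} (hc : IsPrimitiveOn c c' a b) (hf : IsPrimitiveOn f f' a b) :
    IsPrimitiveOn (fun x => c x * f x) (fun x => c' x * f x + c x * f' x) a b := by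
  refine ⟨(hc.1.mul_continuousOn hf.continuousOn isCompact_Icc).add
    (hf.1.continuousOn_mul hc.continuousOn isCompact_Icc), fun x hx => ?_⟩
  have hcx := hc.1.intervalIntegrable_of_mem_Icc hx
  have hfx := hf.1.intervalIntegrable_of_mem_Icc hx
  have hparts := AbsolutelyContinuousOnInterval.integral_deriv_mul_eq_sub
    (hcx.absolutelyContinuousOnInterval_const_add_integral (c a))
    (hfx.absolutelyContinuousOnInterval_const_add_integral (f a))
  simp only [intervalIntegral.integral_same, add_zero] at hparts
  beta_reduce
  rw [hc.2 x hx, hf.2 x hx, ← sub_eq_iff_eq_add', ← hparts]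
  refine intervalIntegral.integral_congr_ae ?_
  filter_upwards [hcx.ae_hasDerivAt_integral, hfx.ae_hasDerivAt_integral] with s hcs hfs hs
  have hs' := uIoc_subset_uIcc hs
  have hsI : s ∈ Icc a b := Icc_subset_Icc le_rfl hx.2 (uIcc_of_le hx.1 ▸ hs')
  rw [((hcs hs' a left_mem_uIcc).const_add (c a)).deriv,
    ((hfs hs' a left_mem_uIcc).const_add (f a)).deriv, hc.2 s hsI, hf.2 s hsI]

theorem smul {ι : Type*} [Fintype ι] {c c' : ℝ → ℝ} {f f' : ℝ → ι → ℝ}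
    (hc : IsPrimitiveOn c c' a b) (hf : IsPrimitiveOn f f' a b) :
    IsPrimitiveOn (fun x => c x • f x) (fun x => c' x • f x + c x • f' x) a b :=
  pi_iff.2 fun i => hc.mul (pi_iff.1 hf i)

end IsPrimitiveOn

open scoped Matrix.Norms.L2Operator in
theorem matNormR_smul_sigma2R_add_smul_sigma3R (a b : ℝ) :
    matNormR (a • sigma2R + b • sigma3R) = √(a ^ 2 + b ^ 2) := by
  set M := a • sigma2R + b • sigma3R
  have hMM : Mᴴ * M = Matrix.diagonal fun _ => a ^ 2 + b ^ 2 := by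
    ext i j
    fin_cases i <;> fin_cases j <;> simp [M, sigma2R, sigma3R, Matrix.mul_apply] <;> ring
  have hM := Matrix.l2_opNorm_conjTranspose_mul_self M
  rw [hMM, Matrix.l2_opNorm_diagonal, pi_norm_const, Real.norm_of_nonneg (by positivity)] at hM
  rw [matNormR, ← Matrix.cstar_norm_def, hM, Real.sqrt_mul_self (norm_nonneg _)]

theorem OmegaPert_sub_OmegaR (p q : ℝ → ℝ) (t : ℝ) (h : ℝ → Fin 2 → ℝ) (x : ℝ) :
    OmegaPert p q t h x - OmegaR p q x =
      ((Real.exp t - 1) / theta t h x * (2 * h x 0 * h x 1)) • sigma2R +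
      ((Real.exp t - 1) / theta t h x * ((h x 1) ^ 2 - (h x 0) ^ 2)) • sigma3R := by
  ext i j
  fin_cases i <;> fin_cases j <;>
    simp [OmegaPert, BmatR, sigma2R, sigma3R, Matrix.vecMulVec_apply, Matrix.vecMul,
      Matrix.mul_apply, dotProduct, Fin.sum_univ_two, -mul_eq_mul_left_iff] <;> ring

theorem BmatR_mulVec_add_perturbed_mulVec {Ω : Matrix (Fin 2) (Fin 2) ℝ} {v v' : Fin 2 → ℝ}
    {lam c κ : ℝ} (hv : BmatR *ᵥ v' + Ω *ᵥ v = lam • v) :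
    BmatR *ᵥ ((-(c * κ * (v 0 ^ 2 + v 1 ^ 2))) • v + c • v') +
      (Ω + κ • (BmatR * Matrix.vecMulVec v v - Matrix.vecMulVec v v * BmatR)) *ᵥ (c • v) =
      lam • (c • v) := by
  have h0 := congrFun hv 0
  have h1 := congrFun hv 1
  simp [BmatR, dotProduct] at h0 h1
  ext i
  fin_cases i <;> simp [BmatR, dotProduct, Matrix.vecMul, Matrix.vecMulVec_apply,
    Matrix.mul_apply, Fin.sum_univ_two]
  · linear_combination c * h0
  · linear_combination c * h1

/-- `(e^{t/2}/θ)' h + (e^{t/2}/θ) h'`, where `θ' = (eᵗ - 1)(h₁² + h₂²)`. -/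
def htildeDeriv (t : ℝ) (h h' : ℝ → Fin 2 → ℝ) (x : ℝ) : Fin 2 → ℝ :=
  (-(Real.exp (t / 2) / theta t h x * ((Real.exp t - 1) / theta t h x) *
    (h x 0 ^ 2 + h x 1 ^ 2))) • h x + (Real.exp (t / 2) / theta t h x) • h' x

section Theta

variable {t b : ℝ} {h : ℝ → Fin 2 → ℝ}

theorem theta_zero : theta t h 0 = 1 := by
  simp [theta]

theorem theta_of_integral_eq_one (hnorm : ∫ x in (0:ℝ)..b, (h x 0 ^ 2 + h x 1 ^ 2) = 1) :
    theta t h b = Real.exp t := by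
  simp [theta, hnorm]

variable (hr : ContinuousOn (fun x => h x 0 ^ 2 + h x 1 ^ 2) (Icc 0 b))
include hr

theorem hasDerivAt_theta {x : ℝ} (hx : x ∈ Ioo 0 b) :
    HasDerivAt (theta t h) ((Real.exp t - 1) * (h x 0 ^ 2 + h x 1 ^ 2)) x :=
  ((hr.hasDerivAt_integral hx).const_mul _).const_add 1

theorem isPrimitiveOn_integral_sq_add_sq :
    IsPrimitiveOn (fun x => ∫ s in (0:ℝ)..x, (h s 0 ^ 2 + h s 1 ^ 2))
      (fun x => h x 0 ^ 2 + h x 1 ^ 2) 0 b :=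
  ⟨hr.integrableOn_compact isCompact_Icc, fun x _ => by simp⟩

theorem continuousOn_theta : ContinuousOn (theta t h) (Icc 0 b) :=
  continuousOn_const.add (continuousOn_const.mul (isPrimitiveOn_integral_sq_add_sq hr).continuousOn)

variable (hnorm : ∫ x in (0:ℝ)..b, (h x 0 ^ 2 + h x 1 ^ 2) = 1)
include hnorm

theorem min_le_theta {x : ℝ} (hx : x ∈ Icc 0 b) : min 1 (Real.exp t) ≤ theta t h x := by
  have hφ0 : 0 ≤ ∫ s in (0:ℝ)..x, (h s 0 ^ 2 + h s 1 ^ 2) :=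
    intervalIntegral.integral_nonneg hx.1 fun _ _ => by positivity
  have hφ1 : ∫ s in (0:ℝ)..x, (h s 0 ^ 2 + h s 1 ^ 2) ≤ 1 :=
    hnorm ▸ intervalIntegral.integral_mono_interval le_rfl hx.1 hx.2
      (ae_of_all _ fun _ => by positivity) (hr.intervalIntegrable_of_Icc (hx.1.trans hx.2))
  rw [theta]
  rcases min_cases 1 (Real.exp t) with ⟨hm, hle⟩ | ⟨hm, hlt⟩ <;> rw [hm] <;> nlinarith

theorem theta_pos {x : ℝ} (hx : x ∈ Icc 0 b) : 0 < theta t h x :=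
  (lt_min one_pos (Real.exp_pos t)).trans_le (min_le_theta hr hnorm hx)

theorem integral_div_theta_sq (hb : 0 ≤ b) :
    ∫ x in (0:ℝ)..b, (h x 0 ^ 2 + h x 1 ^ 2) / theta t h x ^ 2 = (Real.exp t)⁻¹ := by
  have hθ : ∀ x ∈ Icc 0 b, theta t h x ≠ 0 := fun x hx => (theta_pos hr hnorm hx).ne'
  have hf' : ContinuousOn (fun x => (h x 0 ^ 2 + h x 1 ^ 2) / theta t h x ^ 2) (Icc 0 b) :=
    hr.div ((continuousOn_theta hr).pow 2) fun x hx => pow_ne_zero 2 (hθ x hx)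
  rw [intervalIntegral.integral_eq_sub_of_hasDerivAt_of_le hb
    (f := fun x => (∫ s in (0:ℝ)..x, (h s 0 ^ 2 + h s 1 ^ 2)) / theta t h x)
    ((isPrimitiveOn_integral_sq_add_sq hr).continuousOn.div (continuousOn_theta hr) hθ)
    (fun x hx => ((hr.hasDerivAt_integral hx).div (hasDerivAt_theta hr hx)
      (hθ x (Ioo_subset_Icc_self hx))).congr_deriv (by unfold theta; ring))
    (hf'.intervalIntegrable_of_Icc hb)]
  simp [theta_of_integral_eq_one hnorm, theta_zero, hnorm]

theorem mul_integral_div_theta (hb : 0 ≤ b) :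
    (Real.exp t - 1) * ∫ x in (0:ℝ)..b, (h x 0 ^ 2 + h x 1 ^ 2) / theta t h x = t := by
  have hθ : ∀ x ∈ Icc 0 b, theta t h x ≠ 0 := fun x hx => (theta_pos hr hnorm hx).ne'
  rw [← intervalIntegral.integral_const_mul, intervalIntegral.integral_eq_sub_of_hasDerivAt_of_le hb
    (f := fun x => Real.log (theta t h x))
    (f' := fun x => (Real.exp t - 1) * ((h x 0 ^ 2 + h x 1 ^ 2) / theta t h x))
    ((continuousOn_theta hr).log hθ)
    (fun x hx => ((hasDerivAt_theta hr hx).log (hθ x (Ioo_subset_Icc_self hx))).congr_deriv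
      (mul_div_assoc _ _ _))
    ((continuousOn_const.mul (hr.div (continuousOn_theta hr) hθ)).intervalIntegrable_of_Icc hb)]
  simp [theta_of_integral_eq_one hnorm, theta_zero]

theorem integral_htilde_sq (hb : 0 ≤ b) :
    ∫ x in (0:ℝ)..b, (htilde t h x 0 ^ 2 + htilde t h x 1 ^ 2) = 1 := by
  have hsq : ∀ x, htilde t h x 0 ^ 2 + htilde t h x 1 ^ 2 =
      Real.exp t * ((h x 0 ^ 2 + h x 1 ^ 2) / theta t h x ^ 2) := fun x => by
    simp only [htilde, Pi.smul_apply, smul_eq_mul, mul_pow, div_pow, Real.exp_half,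
      Real.sq_sqrt (Real.exp_pos t).le]
    ring
  simp_rw [hsq, intervalIntegral.integral_const_mul, integral_div_theta_sq hr hnorm hb,
    mul_inv_cancel₀ (Real.exp_ne_zero t)]

theorem integral_matNormR_OmegaPert_sub_OmegaR {p q : ℝ → ℝ} (hb : 0 ≤ b) :
    ∫ x in (0:ℝ)..b, matNormR (OmegaPert p q t h x - OmegaR p q x) = |t| := by
  have hpt : EqOn (fun x => matNormR (OmegaPert p q t h x - OmegaR p q x))
      (fun x => |Real.exp t - 1| * ((h x 0 ^ 2 + h x 1 ^ 2) / theta t h x)) (uIcc 0 b) := by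
    intro x hx
    rw [uIcc_of_le hb] at hx
    have hnn : 0 ≤ (h x 0 ^ 2 + h x 1 ^ 2) / theta t h x :=
      div_nonneg (by positivity) (theta_pos hr hnorm hx).le
    dsimp only
    rw [OmegaPert_sub_OmegaR, matNormR_smul_sigma2R_add_smul_sigma3R, ← abs_of_nonneg hnn,
      ← abs_mul, ← Real.sqrt_sq_eq_abs]
    congr 1
    ring
  rw [intervalIntegral.integral_congr hpt, intervalIntegral.integral_const_mul,
    ← abs_of_nonneg (intervalIntegral.integral_nonneg hb fun x hx =>
      div_nonneg (by positivity) (theta_pos hr hnorm hx).le),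
    ← abs_mul, mul_integral_div_theta hr hnorm hb]

variable {h' : ℝ → Fin 2 → ℝ}

theorem isPrimitiveOn_htilde (hh : IsPrimitiveOn h h' 0 b) :
    IsPrimitiveOn (htilde t h) (htildeDeriv t h h') 0 b := by
  have hθ : ∀ x ∈ Icc 0 b, theta t h x ≠ 0 := fun x hx => (theta_pos hr hnorm hx).ne'
  have hcθ : ContinuousOn (fun x => Real.exp (t / 2) / theta t h x) (Icc 0 b) :=
    continuousOn_const.div (continuousOn_theta hr) hθ
  have hκθ : ContinuousOn (fun x => (Real.exp t - 1) / theta t h x) (Icc 0 b) :=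
    continuousOn_const.div (continuousOn_theta hr) hθ
  have hc : IsPrimitiveOn (fun x => Real.exp (t / 2) / theta t h x)
      (fun x => -(Real.exp (t / 2) / theta t h x * ((Real.exp t - 1) / theta t h x) *
        (h x 0 ^ 2 + h x 1 ^ 2))) 0 b :=
    .of_hasDerivAt hcθ
      (fun x hx => ((hasDerivAt_const x _).div (hasDerivAt_theta hr hx)
        (hθ x (Ioo_subset_Icc_self hx))).congr_deriv (by ring))
      ((hcθ.mul hκθ).mul hr).neg.integrableOn_Icc
  exact hc.smul hh

end Theta

theorem BmatR_mulVec_htildeDeriv {p q : ℝ → ℝ} {lam t x : ℝ} {h h' : ℝ → Fin 2 → ℝ}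
    (hx : BmatR *ᵥ h' x + OmegaR p q x *ᵥ h x = lam • h x) :
    BmatR *ᵥ htildeDeriv t h h' x + OmegaPert p q t h x *ᵥ htilde t h x = lam • htilde t h x :=
  BmatR_mulVec_add_perturbed_mulVec hx

theorem stmt_17_general (p q : ℝ → ℝ)
    (lam t : ℝ) (h h' : ℝ → Fin 2 → ℝ)
    (hh'int : IntegrableOn h' (Icc 0 Real.pi))
    (hhAC : ∀ x ∈ Icc (0:ℝ) Real.pi, h x = h 0 + ∫ s in (0:ℝ)..x, h' s)
    (hheq : ∀ᵐ x ∂(volume.restrict (Ioc 0 Real.pi)),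
      BmatR.mulVec (h' x) + (OmegaR p q x).mulVec (h x) = lam • h x)
    (hnorm : (∫ x in (0:ℝ)..Real.pi, ((h x 0) ^ 2 + (h x 1) ^ 2)) = 1) :
    (0 < min 1 (Real.exp t) ∧
      ∀ x ∈ Icc (0:ℝ) Real.pi, min 1 (Real.exp t) ≤ theta t h x) ∧
    (∀ x : ℝ, OmegaPert p q t h x - OmegaR p q x =
      ((Real.exp t - 1) / theta t h x * (2 * h x 0 * h x 1)) • sigma2R +
      ((Real.exp t - 1) / theta t h x * ((h x 1) ^ 2 - (h x 0) ^ 2)) • sigma3R) ∧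
    (∃ g : ℝ → Fin 2 → ℝ,
      IntegrableOn g (Icc 0 Real.pi) ∧
      (∀ x ∈ Icc (0:ℝ) Real.pi,
        htilde t h x = htilde t h 0 + ∫ s in (0:ℝ)..x, g s) ∧
      (∀ᵐ x ∂(volume.restrict (Ioc 0 Real.pi)),
        BmatR.mulVec (g x) + (OmegaPert p q t h x).mulVec (htilde t h x) =
          lam • htilde t h x)) ∧
    ((∫ x in (0:ℝ)..Real.pi, ((htilde t h x 0) ^ 2 + (htilde t h x 1) ^ 2)) = 1) ∧
    ((∫ x in (0:ℝ)..Real.pi, matNormR (OmegaPert p q t h x - OmegaR p q x)) = |t|) := by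
  have hh : IsPrimitiveOn h h' 0 Real.pi := ⟨hh'int, hhAC⟩
  have hr : ContinuousOn (fun x => h x 0 ^ 2 + h x 1 ^ 2) (Icc 0 Real.pi) :=
    ((continuousOn_pi.1 hh.continuousOn 0).pow 2).add ((continuousOn_pi.1 hh.continuousOn 1).pow 2)
  have hh_tilde := isPrimitiveOn_htilde (t := t) hr hnorm hh
  exact ⟨⟨lt_min one_pos (Real.exp_pos t), fun x hx => min_le_theta hr hnorm hx⟩,
    OmegaPert_sub_OmegaR p q t h,
    ⟨htildeDeriv t h h', hh_tilde.1, hh_tilde.2, hheq.mono fun x hx => BmatR_mulVec_htildeDeriv hx⟩,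
    integral_htilde_sq hr hnorm Real.pi_pos.le,
    integral_matNormR_OmegaPert_sub_OmegaR hr hnorm Real.pi_pos.le⟩

/-- The one-norming-constant perturbation of a canonical Dirac
potential: if `h` is a normalized solution of `B h' + Ω h = λ h`, then `θ` is bounded
below by `min(1, eᵗ) > 0`, `Ω_t - Ω` is again a canonical potential matrix,
`h̃ = (e^{t/2}/θ)·h` is an absolutely continuous solution of `B h̃' + Ω_t h̃ = λ h̃`,
`h̃` is normalized, and `∫₀^π ‖Ω_t - Ω‖ = |t|`. -/
theorem stmt_17 (p q : ℝ → ℝ)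
    (hp : IntegrableOn p (Icc 0 Real.pi)) (hq : IntegrableOn q (Icc 0 Real.pi))
    (lam t : ℝ) (h h' : ℝ → Fin 2 → ℝ)
    (hh'int : IntegrableOn h' (Icc 0 Real.pi))
    (hhAC : ∀ x ∈ Icc (0:ℝ) Real.pi, h x = h 0 + ∫ s in (0:ℝ)..x, h' s)
    (hheq : ∀ᵐ x ∂(volume.restrict (Ioc 0 Real.pi)),
      BmatR.mulVec (h' x) + (OmegaR p q x).mulVec (h x) = lam • h x)
    (hnorm : (∫ x in (0:ℝ)..Real.pi, ((h x 0) ^ 2 + (h x 1) ^ 2)) = 1) :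
    (0 < min 1 (Real.exp t) ∧
      ∀ x ∈ Icc (0:ℝ) Real.pi, min 1 (Real.exp t) ≤ theta t h x) ∧
    (∀ x : ℝ, OmegaPert p q t h x - OmegaR p q x =
      ((Real.exp t - 1) / theta t h x * (2 * h x 0 * h x 1)) • sigma2R +
      ((Real.exp t - 1) / theta t h x * ((h x 1) ^ 2 - (h x 0) ^ 2)) • sigma3R) ∧
    (∃ g : ℝ → Fin 2 → ℝ,
      IntegrableOn g (Icc 0 Real.pi) ∧
      (∀ x ∈ Icc (0:ℝ) Real.pi,
        htilde t h x = htilde t h 0 + ∫ s in (0:ℝ)..x, g s) ∧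
      (∀ᵐ x ∂(volume.restrict (Ioc 0 Real.pi)),
        BmatR.mulVec (g x) + (OmegaPert p q t h x).mulVec (htilde t h x) =
          lam • htilde t h x)) ∧
    ((∫ x in (0:ℝ)..Real.pi, ((htilde t h x 0) ^ 2 + (htilde t h x 1) ^ 2)) = 1) ∧
    ((∫ x in (0:ℝ)..Real.pi, matNormR (OmegaPert p q t h x - OmegaR p q x)) = |t|) :=
  stmt_17_general p q lam t h h' hh'int hhAC hheq hnorm
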